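/- Let T be a tree, let u be a vertex of T which belongs to some (γ_t-τ)-set and is not quasi-isolated, and let T_3 be obtained from T by attaching a new path (v,w) via the edge uv. Then γ_t(T_3) = γ_t(T) + 1 and τ(T_3) = τ(T) + 1. -/

import Mathlib

/-!
Write `v = inr 0` and `w = inr 1` for the new path. Adding `v` to a `(γ_t-τ)`-set containing `u`
gives both upper bounds. Conversely, a vertex cover of `T_3` contains an end of the edge `vw`
and its trace on `T` covers `T`. A total dominating set `S` of `T_3` contains `v`, the only
neighbour of `w`, and its trace `L` on `T` dominates every vertex of `T` other than `u`. If `L`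
dominates `u` as well we are done; otherwise adding a neighbour `x` of `u` to `L` gives a total
dominating set of `T` of size at most `|S|` in which `u` is the only private neighbour of `x`,
so `|S| ≤ γ_t(T)` would make `u` quasi-isolated.
-/

open SimpleGraph

/-- `D` is a total dominating set of `G`: every vertex has a neighbor in `D`. -/
def IsTotalDomSet {V : Type*} (G : SimpleGraph V) (D : Finset V) : Prop :=
  ∀ v : V, ∃ u ∈ D, G.Adj v u

/-- `X` is a vertex cover of `G`: every edge has an endpoint in `X`. -/
def IsVertexCover {V : Type*} (G : SimpleGraph V) (X : Finset V) : Prop :=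
  ∀ ⦃a b : V⦄, G.Adj a b → a ∈ X ∨ b ∈ X

/-- The total domination number `γ_t(G)`. -/
noncomputable def gammaT {V : Type*} (G : SimpleGraph V) : ℕ :=
  sInf {n | ∃ D : Finset V, IsTotalDomSet G D ∧ D.card = n}

/-- The vertex cover number `τ(G)`. -/
noncomputable def tau {V : Type*} (G : SimpleGraph V) : ℕ :=
  sInf {n | ∃ X : Finset V, _root_.IsVertexCover G X ∧ X.card = n}

/-- A `(γ_t-τ)`-set: simultaneously a minimum total dominating set and a
minimum vertex cover. -/
def IsGttSet {V : Type*} (G : SimpleGraph V) (D : Finset V) : Prop :=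
  IsTotalDomSet G D ∧ _root_.IsVertexCover G D ∧ D.card = gammaT G ∧ D.card = tau G

/-- The sum `G +_{uv} H`: the disjoint union of `G` and `H` with the extra edge `uv`. -/
def graphSum {α β : Type*} (G : SimpleGraph α) (H : SimpleGraph β) (u : α) (v : β) :
    SimpleGraph (α ⊕ β) :=
  SimpleGraph.fromRel (fun x y =>
    (∃ a b, x = Sum.inl a ∧ y = Sum.inl b ∧ G.Adj a b) ∨
    (∃ a b, x = Sum.inr a ∧ y = Sum.inr b ∧ H.Adj a b) ∨
    (x = Sum.inl u ∧ y = Sum.inr v))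

/-- The private neighborhood `pn(u,S) = {w : N(w) ∩ S = {u}}`. -/
def pn {V : Type*} (G : SimpleGraph V) (S : Finset V) (u : V) : Set V :=
  {w | G.neighborSet w ∩ ↑S = {u}}

/-- `v` is quasi-isolated: for some minimum total dominating set `S` there is
`u ∈ S` with `pn(u,S) = {v}`. -/
def QuasiIsolated {V : Type*} (G : SimpleGraph V) (v : V) : Prop :=
  ∃ S : Finset V, IsTotalDomSet G S ∧ S.card = gammaT G ∧ ∃ u ∈ S, pn G S u = {v}

/-- An end vertex: a vertex of degree 1. -/
def IsEndVertex {V : Type*} (G : SimpleGraph V) (v : V) : Prop :=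
  (G.neighborSet v).ncard = 1

section GraphSum

variable {α β : Type*} {G : SimpleGraph α} {H : SimpleGraph β} {u : α} {v : β}

@[simp]
lemma graphSum_adj_inl_inl {a b : α} :
    (graphSum G H u v).Adj (Sum.inl a) (Sum.inl b) ↔ G.Adj a b := by
  simpa [graphSum, G.adj_comm b a] using G.ne_of_adj (a := a) (b := b)

@[simp]
lemma graphSum_adj_inr_inr {a b : β} :
    (graphSum G H u v).Adj (Sum.inr a) (Sum.inr b) ↔ H.Adj a b := by
  simpa [graphSum, H.adj_comm b a] using H.ne_of_adj (a := a) (b := b)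

@[simp]
lemma graphSum_adj_inl_inr {a : α} {b : β} :
    (graphSum G H u v).Adj (Sum.inl a) (Sum.inr b) ↔ a = u ∧ b = v := by
  simp [graphSum]

@[simp]
lemma graphSum_adj_inr_inl {a : α} {b : β} :
    (graphSum G H u v).Adj (Sum.inr b) (Sum.inl a) ↔ a = u ∧ b = v := by
  rw [adj_comm, graphSum_adj_inl_inr]

end GraphSum

lemma Finset.card_toLeft_lt_card {α β : Type*} {s : Finset (α ⊕ β)} (h : s.toRight.Nonempty) :
    s.toLeft.card < s.card := by
  rw [← s.card_toLeft_add_card_toRight]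
  exact Nat.lt_add_of_pos_right h.card_pos

section Parameters

variable {V : Type*} {G : SimpleGraph V}

lemma gammaT_le_card {D : Finset V} (hD : IsTotalDomSet G D) : gammaT G ≤ D.card :=
  Nat.sInf_le ⟨D, hD, rfl⟩

lemma tau_le_card {X : Finset V} (hX : _root_.IsVertexCover G X) : tau G ≤ X.card :=
  Nat.sInf_le ⟨X, hX, rfl⟩

lemma exists_isTotalDomSet_card_eq_gammaT (h : ∃ D, IsTotalDomSet G D) :
    ∃ D, IsTotalDomSet G D ∧ D.card = gammaT G :=
  let ⟨D, hD⟩ := h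
  Nat.sInf_mem (s := {n | ∃ D, IsTotalDomSet G D ∧ D.card = n}) ⟨D.card, D, hD, rfl⟩

lemma exists_isVertexCover_card_eq_tau (h : ∃ X, _root_.IsVertexCover G X) :
    ∃ X, _root_.IsVertexCover G X ∧ X.card = tau G :=
  let ⟨X, hX⟩ := h
  Nat.sInf_mem (s := {n | ∃ X, _root_.IsVertexCover G X ∧ X.card = n}) ⟨X.card, X, hX, rfl⟩

lemma isTotalDomSet_of_forall_ne {L : Finset V} {u : V} (hdom : ∀ w ≠ u, ∃ b ∈ L, G.Adj w b)
    (hu : ∃ b ∈ L, G.Adj u b) : IsTotalDomSet G L := by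
  intro w
  by_cases h : w = u
  · exact h ▸ hu
  · exact hdom w h

lemma pn_insert_eq_singleton [DecidableEq V] {L : Finset V} {u x : V}
    (hdom : ∀ w ≠ u, ∃ b ∈ L, G.Adj w b) (hu : ∀ b ∈ L, ¬ G.Adj u b) (hux : G.Adj u x) :
    pn G (insert x L) x = {u} := by
  have hxL : x ∉ L := fun hx => hu x hx hux
  ext w
  simp only [pn, Set.mem_ofPred_eq, Set.mem_singleton_iff]
  constructor
  · intro hw
    by_contra hwu
    obtain ⟨b, hb, hwb⟩ := hdom w hwu
    have hbx : b ∈ G.neighborSet w ∩ ↑(insert x L) := ⟨hwb, by simp [hb]⟩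
    rw [hw, Set.mem_singleton_iff] at hbx
    exact hxL (hbx ▸ hb)
  · rintro rfl
    ext b
    simp only [Set.mem_inter_iff, mem_neighborSet, Finset.coe_insert, Set.mem_insert_iff,
      Finset.mem_coe, Set.mem_singleton_iff]
    constructor
    · rintro ⟨hub, rfl | hb⟩
      · rfl
      · exact absurd hub (hu b hb)
    · rintro rfl
      exact ⟨hux, Or.inl rfl⟩

end Parameters

section GraphSumSets

variable {α β : Type*} {G : SimpleGraph α} {H : SimpleGraph β} {u : α} {v : β}

lemma IsTotalDomSet.exists_mem_toLeft_adj {S : Finset (α ⊕ β)}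
    (hS : IsTotalDomSet (graphSum G H u v) S) {w : α} (hw : w ≠ u) :
    ∃ b ∈ S.toLeft, G.Adj w b := by
  obtain ⟨b | b, hb, hwb⟩ := hS (Sum.inl w)
  · exact ⟨b, Finset.mem_toLeft.2 hb, graphSum_adj_inl_inl.1 hwb⟩
  · exact absurd (graphSum_adj_inl_inr.1 hwb).1 hw

lemma IsTotalDomSet.toRight_nonempty {S : Finset (α ⊕ β)}
    (hS : IsTotalDomSet (graphSum G H u v) S) {b : β} (hb : b ≠ v) : S.toRight.Nonempty := by
  obtain ⟨a | c, hc, hbc⟩ := hS (Sum.inr b)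
  · exact absurd (graphSum_adj_inr_inl.1 hbc).2 hb
  · exact ⟨c, Finset.mem_toRight.2 hc⟩

lemma IsVertexCover.toLeft {X : Finset (α ⊕ β)}
    (hX : _root_.IsVertexCover (graphSum G H u v) X) : _root_.IsVertexCover G X.toLeft :=
  fun _ _ hab => by simpa using hX (graphSum_adj_inl_inl.2 hab)

lemma IsVertexCover.toRight_nonempty {X : Finset (α ⊕ β)}
    (hX : _root_.IsVertexCover (graphSum G H u v) X) {b c : β} (hbc : H.Adj b c) :
    X.toRight.Nonempty := by
  rcases hX (graphSum_adj_inr_inr.2 hbc) with h | h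
  · exact ⟨b, Finset.mem_toRight.2 h⟩
  · exact ⟨c, Finset.mem_toRight.2 h⟩

lemma IsVertexCover.disjSum {X : Finset α} {Y : Finset β} (hX : _root_.IsVertexCover G X)
    (hY : _root_.IsVertexCover H Y) (hv : v ∈ Y) :
    _root_.IsVertexCover (graphSum G H u v) (X.disjSum Y) := by
  rintro (a | a) (b | b) hab <;> simp only [graphSum_adj_inl_inl, graphSum_adj_inl_inr,
    graphSum_adj_inr_inl, graphSum_adj_inr_inr] at hab <;>
    simp only [Finset.inl_mem_disjSum, Finset.inr_mem_disjSum]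
  · exact hX hab
  · exact Or.inr (hab.2 ▸ hv)
  · exact Or.inl (hab.2 ▸ hv)
  · exact hY hab

lemma isVertexCover_pathGraph_two_singleton_zero :
    _root_.IsVertexCover (pathGraph 2) {0} := by
  intro a b hab
  rw [pathGraph_two_eq_top, top_adj] at hab
  fin_cases a <;> fin_cases b <;> simp_all

lemma IsTotalDomSet.disjSum_singleton_zero {D : Finset α} (hD : IsTotalDomSet G D) (hu : u ∈ D) :
    IsTotalDomSet (graphSum G (pathGraph 2) u 0) (D.disjSum {0}) := by
  rintro (a | b)
  · obtain ⟨c, hc, hac⟩ := hD a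
    exact ⟨Sum.inl c, Finset.inl_mem_disjSum.2 hc, graphSum_adj_inl_inl.2 hac⟩
  · by_cases hb : b = 0
    · exact ⟨Sum.inl u, Finset.inl_mem_disjSum.2 hu, graphSum_adj_inr_inl.2 ⟨rfl, hb⟩⟩
    · exact ⟨Sum.inr 0, by simp, by simp [pathGraph_two_eq_top, hb]⟩

end GraphSumSets

section LowerBounds

variable {α β : Type*} {G : SimpleGraph α} {H : SimpleGraph β} {u : α} {v : β}

lemma tau_add_one_le_card {X : Finset (α ⊕ β)} (hX : _root_.IsVertexCover (graphSum G H u v) X)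
    {b c : β} (hbc : H.Adj b c) : tau G + 1 ≤ X.card :=
  (tau_le_card hX.toLeft).trans_lt (Finset.card_toLeft_lt_card (hX.toRight_nonempty hbc))

lemma gammaT_add_one_le_card [DecidableEq α] {x : α} (hqi : ¬ QuasiIsolated G u)
    (hux : G.Adj u x) {S : Finset (α ⊕ Fin 2)}
    (hS : IsTotalDomSet (graphSum G (pathGraph 2) u 0) S) : gammaT G + 1 ≤ S.card := by
  set L := S.toLeft
  have hdom : ∀ w ≠ u, ∃ b ∈ L, G.Adj w b := fun w => hS.exists_mem_toLeft_adj
  have hLS : L.card < S.card := Finset.card_toLeft_lt_card (hS.toRight_nonempty one_ne_zero)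
  by_cases huL : ∃ b ∈ L, G.Adj u b
  · exact (gammaT_le_card (isTotalDomSet_of_forall_ne hdom huL)).trans_lt hLS
  push Not at huL
  have hL' : IsTotalDomSet G (insert x L) :=
    isTotalDomSet_of_forall_ne (fun w hw => (hdom w hw).imp fun _ ⟨hb, hwb⟩ =>
      ⟨Finset.mem_insert_of_mem hb, hwb⟩) ⟨x, Finset.mem_insert_self x L, hux⟩
  have hcard : (insert x L).card = L.card + 1 :=
    Finset.card_insert_of_notMem fun hx => huL x hx hux
  by_contra! hlt
  exact hqi ⟨insert x L, hL', le_antisymm (by omega) (gammaT_le_card hL'), x,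
    Finset.mem_insert_self x L, pn_insert_eq_singleton hdom huL hux⟩

end LowerBounds

theorem stmt13_general {V : Type*} (T : SimpleGraph V) (u : V)
    (hu : ∃ D : Finset V, IsGttSet T D ∧ u ∈ D) (hqi : ¬ QuasiIsolated T u) :
    gammaT (graphSum T (SimpleGraph.pathGraph 2) u 0) = gammaT T + 1 ∧
    tau (graphSum T (SimpleGraph.pathGraph 2) u 0) = tau T + 1 := by
  classical
  obtain ⟨D, ⟨hDtd, hDvc, hDγ, hDτ⟩, huD⟩ := hu
  obtain ⟨x, -, hux⟩ := hDtd u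
  have hD'td := hDtd.disjSum_singleton_zero huD
  have hD'vc : _root_.IsVertexCover (graphSum T (pathGraph 2) u 0) (D.disjSum {0}) :=
    hDvc.disjSum isVertexCover_pathGraph_two_singleton_zero (Finset.mem_singleton_self 0)
  have hD'card : (D.disjSum ({0} : Finset (Fin 2))).card = D.card + 1 := Finset.card_disjSum D {0}
  obtain ⟨S, hS, hSγ⟩ := exists_isTotalDomSet_card_eq_gammaT ⟨_, hD'td⟩
  obtain ⟨X, hX, hXτ⟩ := exists_isVertexCover_card_eq_tau ⟨_, hD'vc⟩
  refine ⟨le_antisymm ?_ ?_, le_antisymm ?_ ?_⟩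
  · exact (gammaT_le_card hD'td).trans_eq (by rw [hD'card, hDγ])
  · exact hSγ ▸ gammaT_add_one_le_card hqi hux hS
  · exact (tau_le_card hD'vc).trans_eq (by rw [hD'card, hDτ])
  · exact hXτ ▸ tau_add_one_le_card hX (pathGraph_adj.2 (Or.inl rfl) : (pathGraph 2).Adj 0 1)

/-- Operation `O_3`: attaching a `P_2 = (v,w)` by the edge `uv` to a vertex `u` in some
`(γ_t-τ)`-set which is not quasi-isolated raises `γ_t` and `τ` by `1`. -/
theorem stmt13 {V : Type*} (T : SimpleGraph V) (hT : T.IsTree) (u : V)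
    (hu : ∃ D : Finset V, IsGttSet T D ∧ u ∈ D) (hqi : ¬ QuasiIsolated T u) :
    gammaT (graphSum T (SimpleGraph.pathGraph 2) u 0) = gammaT T + 1 ∧
    tau (graphSum T (SimpleGraph.pathGraph 2) u 0) = tau T + 1 :=
  stmt13_general T u hu hqi
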